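/- arXiv:2207.09495 — 2 statements merged into one kernel-verified Lean document; each statement's English description precedes it below -/
import Mathlib

section
/- Let G be a finite group and N a subgroup of G. If the sum, taken over all conjugacy classes C of G consisting of elements of prime order, of the rational numbers |C ∩ N|² / |C| is strictly less than 1, then there exists x ∈ G such that N ∩ N^x is the trivial subgroup. -/
/-!
Suppose `N ∩ N^x ≠ 1` for every `x`. A nontrivial finite group contains an element of prime
order, so every `x` conjugates some `g ∈ N` of prime order back into `N`, and
`|G| ≤ ∑_g #{x | x g x⁻¹ ∈ N}` over such `g`. By orbit–stabilizer for the conjugation action,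
`#{x | x g x⁻¹ ∈ N} = |G| |C ∩ N| / |C|` where `C` is the class of `g`; grouping the sum by classes
turns the bound into `|G| ≤ |G| ∑_C |C ∩ N|² / |C| < |G|`.
-/

/-- The conjugate subgroup `N^x = x⁻¹ N x`. -/
def conjSubgroup {G : Type*} [Group G] (N : Subgroup G) (x : G) : Subgroup G :=
  N.map (MulAut.conj x⁻¹).toMonoidHom

theorem mem_conjSubgroup {G : Type*} [Group G] {N : Subgroup G} {x g : G} :
    g ∈ conjSubgroup N x ↔ x * g * x⁻¹ ∈ N := by
  constructor
  · rintro ⟨n, hn, rfl⟩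
    simpa [mul_assoc] using hn
  · intro hg
    refine ⟨x * g * x⁻¹, hg, ?_⟩
    simp only [MulEquiv.coe_toMonoidHom, MulAut.conj_apply]
    group

namespace MulAction

variable {G X : Type*} [Group G] [MulAction G X]

theorem card_setOf_smul_mem (b : X) (s : Set X) :
    Nat.card {g : G | g • b ∈ s} =
      Nat.card (stabilizer G b) * Nat.card (orbit G b ∩ s : Set X) := by
  set e := orbitEquivQuotientStabilizer G b
  have hpre : {g : G | g • b ∈ s} = QuotientGroup.mk ⁻¹' {q | (e.symm q : X) ∈ s} := rfl
  rw [hpre, Nat.card_congr (QuotientGroup.preimageMkEquivSubgroupProdSet _ _), Nat.card_prod]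
  exact congrArg _ <| Nat.card_congr <| (e.symm.subtypeEquiv fun _ => Iff.rfl).trans
    (Equiv.subtypeSubtypeEquivSubtypeInter (· ∈ orbit G b) (· ∈ s))

theorem card_setOf_smul_mem_mul_card_orbit (b : X) (s : Set X) :
    Nat.card {g : G | g • b ∈ s} * Nat.card (orbit G b) =
      Nat.card G * Nat.card (orbit G b ∩ s : Set X) := by
  rw [card_setOf_smul_mem, Subgroup.card_eq_card_quotient_mul_card_subgroup (stabilizer G b),
    ← Nat.card_congr (orbitEquivQuotientStabilizer G b)]
  ring

end MulAction

theorem IsConj.orderOf_eq {G : Type*} [Group G] {a b : G} (h : IsConj a b) :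
    orderOf a = orderOf b :=
  let ⟨_, hc⟩ := h
  hc.orderOf_eq _

theorem Subgroup.exists_prime_orderOf_mem {G : Type*} [Group G] [Finite G] {H : Subgroup G}
    (hH : H ≠ ⊥) : ∃ g ∈ H, (orderOf g).Prime := by
  obtain ⟨g, hgH, hg1⟩ := H.bot_or_exists_ne_one.resolve_left hH
  obtain ⟨p, hp, hpg⟩ := Nat.exists_prime_and_dvd (orderOf_eq_one_iff.not.mpr hg1)
  refine ⟨g ^ (orderOf g / p), H.pow_mem hgH _, ?_⟩
  rwa [orderOf_pow_orderOf_div (isOfFinOrder_of_finite g).orderOf_pos.ne' hpg]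

namespace ConjClasses

variable {G : Type*} [Group G]

theorem forall_orderOf_mem_carrier_mk_iff (g : G) (p : ℕ → Prop) :
    (∀ k ∈ (ConjClasses.mk g).carrier, p (orderOf k)) ↔ p (orderOf g) := by
  refine ⟨fun h => h g mem_carrier_mk, fun hg k hk => ?_⟩
  rw [mem_carrier_iff_mk_eq, mk_eq_mk_iff_isConj] at hk
  rwa [hk.orderOf_eq]

-- `ConjAct G` is `G` itself, acting by `c • g = c * g * c⁻¹` definitionally.
theorem card_setOf_conj_mem_mul_card_carrier (g : G) (s : Set G) :
    Nat.card {x : G | x * g * x⁻¹ ∈ s} * Nat.card (ConjClasses.mk g).carrier =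
      Nat.card G * Nat.card ((ConjClasses.mk g).carrier ∩ s : Set G) := by
  rw [← ConjAct.orbit_eq_carrier_conjClasses]
  exact MulAction.card_setOf_smul_mem_mul_card_orbit (G := ConjAct G) g s

theorem finsum_mem_comp_mk {M : Type*} [AddCommMonoid M] [Finite G] (s : Set G)
    (S : Set (ConjClasses G)) (F : ConjClasses G → M) :
    ∑ᶠ g ∈ s ∩ ConjClasses.mk ⁻¹' S, F (ConjClasses.mk g) =
      ∑ᶠ C ∈ S, Nat.card (C.carrier ∩ s : Set G) • F C := by
  classical
  cases nonempty_fintype G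
  rw [finsum_mem_eq_toFinset_sum, finsum_mem_eq_toFinset_sum,
    ← Finset.sum_fiberwise_of_maps_to' (t := S.toFinset) (g := ConjClasses.mk) (by simp)]
  refine Finset.sum_congr rfl fun C hC => ?_
  rw [Set.mem_toFinset] at hC
  rw [Finset.sum_const, Nat.card_eq_card_toFinset]
  congr 2
  ext g
  simp only [Finset.mem_filter, Set.mem_toFinset, Set.mem_inter_iff, Set.mem_preimage,
    mem_carrier_iff_mk_eq]
  exact ⟨fun ⟨⟨hs, _⟩, hg⟩ => ⟨hg, hs⟩, fun ⟨hg, hs⟩ => ⟨⟨hs, hg ▸ hC⟩, hg⟩⟩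

theorem finsum_card_setOf_conj_mem {K : Type*} [Field K] [CharZero K] [Finite G] (s : Set G)
    (S : Set (ConjClasses G)) :
    ∑ᶠ g ∈ s ∩ ConjClasses.mk ⁻¹' S, (Nat.card {x : G | x * g * x⁻¹ ∈ s} : K) =
      Nat.card G * ∑ᶠ C ∈ S, (Nat.card (C.carrier ∩ s : Set G) : K) ^ 2 / Nat.card C.carrier := by
  have hcount (g : G) : (Nat.card {x : G | x * g * x⁻¹ ∈ s} : K) =
      Nat.card G * Nat.card ((ConjClasses.mk g).carrier ∩ s : Set G) /
        Nat.card (ConjClasses.mk g).carrier := by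
    have : Nat.card (ConjClasses.mk g).carrier ≠ 0 :=
      Nat.card_ne_zero.mpr ⟨⟨g, mem_carrier_mk⟩, inferInstance⟩
    rw [eq_div_iff (by exact_mod_cast this)]
    exact_mod_cast card_setOf_conj_mem_mul_card_carrier g s
  rw [finsum_mem_congr rfl fun g _ => hcount g, finsum_mem_comp_mk s S
    (fun C => (Nat.card G * Nat.card (C.carrier ∩ s : Set G) / Nat.card C.carrier : K)),
    mul_finsum_mem]
  refine finsum_mem_congr rfl fun C _ => ?_
  rw [nsmul_eq_mul]
  ring

end ConjClasses

/-- If `G` is a finite group, `N ≤ G`, and the sum over the conjugacy classes `C` of `G`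
consisting of elements of prime order of `|C ∩ N|² / |C|` is less than `1`, then
`N ∩ N^x = 1` for some `x ∈ G`. -/
theorem stmt0 {G : Type*} [Group G] [Finite G] (N : Subgroup G)
    (h : (∑ᶠ C ∈ {C : ConjClasses G | ∀ g ∈ C.carrier, (orderOf g).Prime},
        ((Nat.card (C.carrier ∩ (N : Set G) : Set G) : ℚ)) ^ 2 /
          (Nat.card C.carrier : ℚ)) < 1) :
    ∃ x : G, N ⊓ conjSubgroup N x = ⊥ := by
  by_contra! hcon
  set S := {C : ConjClasses G | ∀ g ∈ C.carrier, (orderOf g).Prime}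
  set P := (N : Set G) ∩ ConjClasses.mk ⁻¹' S
  have hcover : ⋃ g ∈ P, {x : G | x * g * x⁻¹ ∈ N} = Set.univ := by
    refine Set.eq_univ_of_forall fun x => ?_
    obtain ⟨g, hg, hp⟩ := Subgroup.exists_prime_orderOf_mem (hcon x)
    rw [Subgroup.mem_inf, mem_conjSubgroup] at hg
    exact Set.mem_biUnion
      ⟨hg.1, (ConjClasses.forall_orderOf_mem_carrier_mk_iff g Nat.Prime).2 hp⟩ hg.2
  have hcard : Nat.card G ≤ ∑ᶠ g ∈ P, Nat.card {x : G | x * g * x⁻¹ ∈ N} := by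
    simpa only [Nat.card_coe_set_eq, hcover, Set.ncard_univ] using
      (Set.toFinite P).ncard_biUnion_le fun g => {x : G | x * g * x⁻¹ ∈ N}
  have hle : (Nat.card G : ℚ) ≤ Nat.card G * ∑ᶠ C ∈ S,
      (Nat.card (C.carrier ∩ (N : Set G) : Set G) : ℚ) ^ 2 / Nat.card C.carrier := by
    rw [← ConjClasses.finsum_card_setOf_conj_mem, ← Nat.cast_finsum_mem (Set.toFinite P)]
    exact_mod_cast hcard
  have hG : (0 : ℚ) < Nat.card G := by exact_mod_cast Nat.card_pos
  exact ((mul_lt_iff_lt_one_right hG).2 h).not_ge hle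
end

section
/- Let G = SL₃(𝔽₂), let P be a Sylow 3-subgroup of G, and let N be the normaliser of P in G. Then N has order 6 and there exists x ∈ G such that N ∩ N^x is the trivial subgroup. -/
open Subgroup

section Conjugation

variable {G : Type*} [Group G]

theorem mem_conjSubgroup_iff {N : Subgroup G} {x y : G} :
    y ∈ conjSubgroup N x ↔ x * y * x⁻¹ ∈ N := by
  rw [conjSubgroup, mem_map_equiv, MulAut.conj_symm_apply, inv_inv]

theorem conjSubgroup_map_conj (N : Subgroup G) (g x : G) :
    conjSubgroup (N.map (MulAut.conj g).toMonoidHom) (g * x * g⁻¹) =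
      (conjSubgroup N x).map (MulAut.conj g).toMonoidHom := by
  simp only [conjSubgroup, map_map]
  congr 1
  ext z
  simp only [MonoidHom.comp_apply, MulEquiv.coe_toMonoidHom, MulAut.conj_apply]
  group

theorem map_conj_inf_conjSubgroup (N : Subgroup G) (g x : G) :
    N.map (MulAut.conj g).toMonoidHom ⊓
        conjSubgroup (N.map (MulAut.conj g).toMonoidHom) (g * x * g⁻¹) =
      (N ⊓ conjSubgroup N x).map (MulAut.conj g).toMonoidHom := by
  rw [conjSubgroup_map_conj, map_inf _ _ _ (MulAut.conj g).injective]

theorem mem_normalizer_zpowers_iff [Finite G] {c g : G} :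
    g ∈ normalizer (zpowers c : Set G) ↔ ∃ k < orderOf c, g * c = c ^ k * g := by
  classical
  have hconj : g ∈ normalizer (zpowers c : Set G) ↔ g * c * g⁻¹ ∈ zpowers c := by
    refine ⟨fun h ↦ (h c).mp (mem_zpowers c), fun h ↦ mem_normalizer_fintype ?_⟩
    rintro _ ⟨k, rfl⟩
    simpa [← MulAut.conj_apply, map_zpow] using zpow_mem h k
  simp only [hconj, mem_zpowers_iff_mem_range_orderOf, Finset.mem_image, Finset.mem_range,
    eq_comm (b := g * c * g⁻¹), mul_inv_eq_iff_eq_mul]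

theorem Sylow.exists_normalizer_eq_map_conj [Finite G] {p : ℕ} [Fact p.Prime] (P Q : Sylow p G) :
    ∃ g : G, normalizer ((Q : Subgroup G) : Set G) =
      (normalizer ((P : Subgroup G) : Set G)).map (MulAut.conj g).toMonoidHom := by
  obtain ⟨g, rfl⟩ := MulAction.exists_smul_eq G P Q
  exact ⟨g, (map_equiv_normalizer_eq (P : Subgroup G) (MulAut.conj g)).symm⟩

end Conjugation

namespace SL3F2

local notation "G" => Matrix.SpecialLinearGroup (Fin 3) (ZMod 2)

def threeCycle : G := ⟨!![0, 1, 0; 0, 0, 1; 1, 0, 0], by decide⟩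

def transvection : G := ⟨!![1, 1, 0; 0, 1, 0; 0, 0, 1], by decide⟩

local notation "N₀" => normalizer (zpowers threeCycle : Set G)

theorem card_eq : Nat.card G = 168 := by
  rw [Nat.card_eq_fintype_card]
  decide +kernel

theorem orderOf_threeCycle : orderOf threeCycle = 3 :=
  orderOf_eq_prime (by decide) (by decide)

theorem index_zpowers_threeCycle : (zpowers threeCycle).index = 56 := by
  have h := (zpowers threeCycle).index_mul_card
  rw [Nat.card_zpowers, orderOf_threeCycle, card_eq] at h
  omega

def sylowThree : Sylow 3 G :=
  (IsPGroup.of_card (n := 1) (by rw [Nat.card_zpowers, orderOf_threeCycle, pow_one])).toSylow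
    (by rw [index_zpowers_threeCycle]; decide)

theorem coe_sylowThree : (sylowThree : Subgroup G) = zpowers threeCycle := rfl

theorem mem_normalizer_zpowers_threeCycle_iff {g : G} :
    g ∈ N₀ ↔ ∃ k < 3, g * threeCycle = threeCycle ^ k * g := by
  rw [mem_normalizer_zpowers_iff, orderOf_threeCycle]

theorem card_normalizer_zpowers_threeCycle : Nat.card N₀ = 6 := by
  rw [Nat.card_congr (Equiv.subtypeEquivRight fun _ ↦ mem_normalizer_zpowers_threeCycle_iff),
    Nat.card_eq_fintype_card]
  decide +kernel

-- The kernel computations below avoid inverses, whose evaluation in `SL₃(𝔽₂)` is costly.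
theorem transvection_inv : transvection⁻¹ = transvection :=
  inv_eq_of_mul_eq_one_right (by decide)

theorem normalizer_inf_conjSubgroup_transvection : N₀ ⊓ conjSubgroup N₀ transvection = ⊥ := by
  refine eq_bot_iff.mpr fun y hy ↦ ?_
  rw [mem_inf, mem_conjSubgroup_iff, transvection_inv, mem_normalizer_zpowers_threeCycle_iff,
    mem_normalizer_zpowers_threeCycle_iff] at hy
  rw [mem_bot]
  revert y
  decide +kernel

end SL3F2

/-- If `N` is the normaliser of a Sylow `3`-subgroup of `G = SL₃(𝔽₂)`, then `|N| = 6`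
and `N ∩ N^x = 1` for some `x ∈ G`. -/
theorem stmt6 (P : Sylow 3 (Matrix.SpecialLinearGroup (Fin 3) (ZMod 2)))
    (N : Subgroup (Matrix.SpecialLinearGroup (Fin 3) (ZMod 2)))
    (hN : N = Subgroup.normalizer ((P : Subgroup (Matrix.SpecialLinearGroup (Fin 3) (ZMod 2))) : Set (Matrix.SpecialLinearGroup (Fin 3) (ZMod 2)))) :
    Nat.card N = 6 ∧
      ∃ x : Matrix.SpecialLinearGroup (Fin 3) (ZMod 2),
        N ⊓ conjSubgroup N x = ⊥ := by
  obtain ⟨g, hg⟩ := Sylow.exists_normalizer_eq_map_conj SL3F2.sylowThree P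
  rw [hg, SL3F2.coe_sylowThree] at hN
  subst hN
  refine ⟨?_, g * SL3F2.transvection * g⁻¹, ?_⟩
  · rw [card_map_of_injective (MulAut.conj g).injective,
      SL3F2.card_normalizer_zpowers_threeCycle]
  · rw [map_conj_inf_conjSubgroup, SL3F2.normalizer_inf_conjSubgroup_transvection,
      Subgroup.map_bot]
end
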